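/- Let A be a bounded linear operator on a complex Hilbert space with w²(A) = (1/4)‖A*A + AA*‖. Then ‖Re(A) + Im(A)‖² = ‖Re(A) − Im(A)‖² = (1/2)‖A*A + AA*‖. -/

import Mathlib

/-!
Put `P = Re A + Im A` and `M = Re A - Im A`. These are the real parts of `(1 - i) A` and
`(1 + i) A`, and the norm of a self-adjoint operator is its numerical radius, which dominates
that of the real part; hence `‖P‖², ‖M‖² ≤ 2 w(A)²`. On the other hand
`P² + M² = A*A + AA*`, so the C*-identity gives `‖A*A + AA*‖ ≤ ‖P‖² + ‖M‖² ≤ 4 w(A)²`, and the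
hypothesis makes this chain tight.
-/

open scoped InnerProductSpace
open ContinuousLinearMap

/-- The numerical radius of a bounded linear operator. -/
noncomputable def numRadius {H : Type*} [NormedAddCommGroup H] [InnerProductSpace ℂ H]
    (A : H →L[ℂ] H) : ℝ :=
  sSup {r : ℝ | ∃ x : H, ‖x‖ = 1 ∧ r = ‖⟪A x, x⟫_ℂ‖}

/-- The Crawford number of a bounded linear operator. -/
noncomputable def crawford {H : Type*} [NormedAddCommGroup H] [InnerProductSpace ℂ H]
    (A : H →L[ℂ] H) : ℝ :=
  sInf {r : ℝ | ∃ x : H, ‖x‖ = 1 ∧ r = ‖⟪A x, x⟫_ℂ‖}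

/-- The real part of a bounded linear operator. -/
noncomputable def reP {H : Type*} [NormedAddCommGroup H] [InnerProductSpace ℂ H]
    [CompleteSpace H] (A : H →L[ℂ] H) : H →L[ℂ] H :=
  ((2 : ℂ)⁻¹) • (A + adjoint A)

/-- The imaginary part of a bounded linear operator. -/
noncomputable def imP {H : Type*} [NormedAddCommGroup H] [InnerProductSpace ℂ H]
    [CompleteSpace H] (A : H →L[ℂ] H) : H →L[ℂ] H :=
  ((2 * Complex.I)⁻¹) • (A - adjoint A)

section

variable {H : Type*} [NormedAddCommGroup H] [InnerProductSpace ℂ H]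

lemma bddAbove_numRadius_set (B : H →L[ℂ] H) :
    BddAbove {r : ℝ | ∃ x : H, ‖x‖ = 1 ∧ r = ‖⟪B x, x⟫_ℂ‖} := by
  refine ⟨‖B‖, ?_⟩
  rintro r ⟨x, hx, rfl⟩
  calc ‖⟪B x, x⟫_ℂ‖ ≤ ‖B x‖ * ‖x‖ := norm_inner_le_norm _ _
    _ ≤ ‖B‖ * ‖x‖ * ‖x‖ := by gcongr; exact B.le_opNorm x
    _ = ‖B‖ := by simp [hx]

lemma numRadius_nonneg (B : H →L[ℂ] H) : 0 ≤ numRadius B :=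
  Real.sSup_nonneg fun _ ⟨_, _, hr⟩ ↦ hr ▸ norm_nonneg _

lemma norm_inner_le_numRadius_mul (B : H →L[ℂ] H) (x : H) :
    ‖⟪B x, x⟫_ℂ‖ ≤ numRadius B * ‖x‖ ^ 2 := by
  rcases eq_or_ne x 0 with rfl | hx
  · simp
  have hx' : 0 < ‖x‖ := norm_pos_iff.mpr hx
  set u : H := (‖x‖⁻¹ : ℂ) • x
  have hu : ‖u‖ = 1 := by simp [u, norm_smul, hx'.ne']
  have huB : ‖⟪B u, u⟫_ℂ‖ = ‖⟪B x, x⟫_ℂ‖ / ‖x‖ ^ 2 := by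
    simp only [u, map_smul, inner_smul_left, inner_smul_right, norm_mul, RCLike.norm_conj]
    simp [field]
  exact (div_le_iff₀ (by positivity)).mp (huB ▸ le_csSup (bddAbove_numRadius_set B) ⟨u, hu, rfl⟩)

lemma numRadius_smul (c : ℂ) (B : H →L[ℂ] H) : numRadius (c • B) = ‖c‖ * numRadius B := by
  unfold numRadius
  rw [← smul_eq_mul, ← Real.sSup_smul_of_nonneg (norm_nonneg c)]
  congr 1
  ext r
  simp only [Set.mem_smul_set, Set.mem_ofPred_eq, smul_apply, inner_smul_left, norm_mul,
    RCLike.norm_conj, smul_eq_mul]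
  exact ⟨fun ⟨x, hx, hr⟩ ↦ ⟨_, ⟨x, hx, rfl⟩, hr.symm⟩, fun ⟨_, ⟨x, hx, rfl⟩, hr⟩ ↦ ⟨x, hx, hr.symm⟩⟩

variable [CompleteSpace H]

lemma isSelfAdjoint_reP (B : H →L[ℂ] H) : IsSelfAdjoint (reP B) := by
  unfold reP
  exact .smul (by simp [IsSelfAdjoint]) (IsSelfAdjoint.add_star_self B)

lemma re_inner_reP_apply_self (B : H →L[ℂ] H) (x : H) :
    RCLike.re ⟪reP B x, x⟫_ℂ = RCLike.re ⟪B x, x⟫_ℂ := by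
  rw [reP, smul_apply, add_apply, inner_smul_left, inner_add_left, adjoint_inner_left,
    ← inner_conj_symm x (B x), RCLike.add_conj]
  simp

lemma norm_reP_le_numRadius (B : H →L[ℂ] H) : ‖reP B‖ ≤ numRadius B := by
  rw [(reP B).norm_eq_iSup_rayleighQuotient (isSelfAdjoint_reP B).isSymmetric]
  refine ciSup_le fun x ↦ ?_
  rw [rayleighQuotient, reApplyInnerSelf_apply, re_inner_reP_apply_self, abs_div, abs_sq]
  exact div_le_of_le_mul₀ (by positivity) (numRadius_nonneg B)
    ((Complex.abs_re_le_norm _).trans (norm_inner_le_numRadius_mul B x))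

lemma reP_add_imP (A : H →L[ℂ] H) : reP A + imP A = reP ((1 - Complex.I) • A) := by
  simp only [reP, imP, map_smulₛₗ]
  match_scalars <;> simp [Complex.ext_iff]

lemma reP_sub_imP (A : H →L[ℂ] H) : reP A - imP A = reP ((1 + Complex.I) • A) := by
  simp only [reP, imP, map_smulₛₗ]
  match_scalars <;> simp [Complex.ext_iff]

lemma sq_reP_add_imP_add_sq_reP_sub_imP (A : H →L[ℂ] H) :
    (reP A + imP A) ^ 2 + (reP A - imP A) ^ 2 = adjoint A * A + A * adjoint A := by
  ext x
  simp only [reP, imP, pow_two, mul_apply_eq_comp, add_apply, sub_apply, smul_apply,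
    map_add, map_sub, map_smul, smul_add, smul_sub, smul_smul]
  match_scalars <;> simp [Complex.ext_iff] <;> ring

lemma norm_reP_smul_sq_le (c : ℂ) (B : H →L[ℂ] H) :
    ‖reP (c • B)‖ ^ 2 ≤ ‖c‖ ^ 2 * numRadius B ^ 2 := by
  rw [← mul_pow, ← numRadius_smul]
  gcongr
  exact norm_reP_le_numRadius _

end

theorem stmt11_general {H : Type*} [NormedAddCommGroup H] [InnerProductSpace ℂ H]
    [CompleteSpace H] (A : H →L[ℂ] H)
    (h : numRadius A ^ 2 = (1/4 : ℝ) * ‖adjoint A * A + A * adjoint A‖) :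
    ‖reP A + imP A‖ ^ 2 = ‖reP A - imP A‖ ^ 2 ∧
    ‖reP A - imP A‖ ^ 2 = (1/2 : ℝ) * ‖adjoint A * A + A * adjoint A‖ := by
  have hnorm : ‖(1 - Complex.I)‖ ^ 2 = 2 ∧ ‖(1 + Complex.I)‖ ^ 2 = 2 := by
    simp [Complex.sq_norm, Complex.normSq_apply]; norm_num
  have hP : ‖reP A + imP A‖ ^ 2 ≤ 2 * numRadius A ^ 2 :=
    reP_add_imP A ▸ hnorm.1 ▸ norm_reP_smul_sq_le _ A
  have hM : ‖reP A - imP A‖ ^ 2 ≤ 2 * numRadius A ^ 2 :=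
    reP_sub_imP A ▸ hnorm.2 ▸ norm_reP_smul_sq_le _ A
  have hsum : ‖adjoint A * A + A * adjoint A‖ ≤ ‖reP A + imP A‖ ^ 2 + ‖reP A - imP A‖ ^ 2 := by
    rw [← sq_reP_add_imP_add_sq_reP_sub_imP, reP_add_imP, reP_sub_imP, sq, sq,
      ← (isSelfAdjoint_reP _).norm_mul_self, ← (isSelfAdjoint_reP _).norm_mul_self]
    exact norm_add_le _ _
  constructor <;> linarith

theorem stmt11 {H : Type*} [NormedAddCommGroup H] [InnerProductSpace ℂ H]
    [CompleteSpace H] [Nontrivial H] (A : H →L[ℂ] H)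
    (h : numRadius A ^ 2 = (1/4 : ℝ) * ‖adjoint A * A + A * adjoint A‖) :
    ‖reP A + imP A‖ ^ 2 = ‖reP A - imP A‖ ^ 2 ∧
    ‖reP A - imP A‖ ^ 2 = (1/2 : ℝ) * ‖adjoint A * A + A * adjoint A‖ :=
  stmt11_general A h
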